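/- arXiv:2205.11921 — 6 statements merged into one kernel-verified Lean document; each statement's English description precedes it below -/
import Mathlib

section
/- Let n ≥ 1, let g ∈ ℝⁿ be nonzero, let 1 ≤ k ≤ n and τ > 0. Let S ⊆ {1,…,n} be a set of k indices such that |g_i| ≥ |g_j| for all i ∈ S and j ∉ S, and let g^topk ∈ ℝⁿ be the vector with (g^topk)_i = g_i for i ∈ S and (g^topk)_i = 0 otherwise. Then the vector v* = −τ · g^topk / ‖g^topk‖₂ belongs to C_k(τ) and satisfies ⟨v*, g⟩ ≤ ⟨v, g⟩ for every v ∈ C_k(τ); moreover ⟨v*, g⟩ = −τ‖g^topk‖₂. -/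
/-!
A linear functional attains its minimum over a convex hull on the generators. If `u` is
supported on `T` with `#T ≤ k` and `‖u‖ ≤ τ`, Cauchy–Schwarz against `g` restricted to `T` gives
`⟪u, g⟫ ≥ -τ ‖g_T‖`, and an exchange argument gives `‖g_T‖ ≤ ‖g_S‖` because `S` collects the `k`
entries of largest absolute value. The vector `v*` is such a generator and attains `-τ ‖g_S‖`.
-/

open RealInnerProductSpace

/-- The k-support norm ball of radius τ in ℝⁿ: the convex hull of all k-sparse
vectors of Euclidean norm at most τ. -/
noncomputable def kSupportBall (n k : ℕ) (τ : ℝ) : Set (EuclideanSpace ℝ (Fin n)) :=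
  convexHull ℝ {v : EuclideanSpace ℝ (Fin n) | {i | v i ≠ 0}.ncard ≤ k ∧ ‖v‖ ≤ τ}

namespace Finset

variable {α M : Type*} [AddCommMonoid M] [LinearOrder M] [IsOrderedAddMonoid M]

theorem sum_le_sum_of_card_le_of_forall_le {A B : Finset α} {f : α → M}
    (hf : ∀ b ∈ B, 0 ≤ f b) (hcard : #A ≤ #B) (h : ∀ a ∈ A, ∀ b ∈ B, f a ≤ f b) :
    ∑ a ∈ A, f a ≤ ∑ b ∈ B, f b := by
  rcases B.eq_empty_or_nonempty with rfl | hB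
  · simp_all
  obtain ⟨b₀, hb₀, hb₀_min⟩ := B.exists_mem_eq_inf' hB f
  calc ∑ a ∈ A, f a ≤ #A • B.inf' hB f :=
        sum_le_card_nsmul _ _ _ fun a ha => le_inf' hB f fun b hb => h a ha b hb
    _ ≤ #B • B.inf' hB f := nsmul_le_nsmul_left (hb₀_min ▸ hf b₀ hb₀) hcard
    _ ≤ ∑ b ∈ B, f b := card_nsmul_le_sum _ _ _ fun b hb => inf'_le f hb

theorem sum_le_sum_of_card_le_of_isTop [DecidableEq α] {S T : Finset α} {f : α → M}
    (hf : ∀ i, 0 ≤ f i) (htop : ∀ i ∈ S, ∀ j ∉ S, f j ≤ f i) (hcard : #T ≤ #S) :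
    ∑ i ∈ T, f i ≤ ∑ i ∈ S, f i := by
  have hcard_sdiff : #(T \ S) ≤ #(S \ T) := by
    have := card_sdiff_add_card_inter T S
    have := card_sdiff_add_card_inter S T
    rw [inter_comm] at this
    omega
  rw [← sum_inter_add_sum_sdiff T S, ← sum_inter_add_sum_sdiff S T, inter_comm T S]
  exact add_le_add le_rfl <| sum_le_sum_of_card_le_of_forall_le (fun b _ => hf b) hcard_sdiff
    fun a ha b hb => htop b (mem_sdiff.1 hb).1 a (mem_sdiff.1 ha).2

end Finset

theorem le_inner_of_mem_convexHull {E : Type*} [NormedAddCommGroup E] [InnerProductSpace ℝ E]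
    {s : Set E} {g : E} {c : ℝ} (h : ∀ u ∈ s, c ≤ ⟪u, g⟫) {v : E} (hv : v ∈ convexHull ℝ s) :
    c ≤ ⟪v, g⟫ :=
  convexHull_min h (convex_halfSpace_ge (innerₛₗ ℝ |>.flip g).isLinear c) hv

theorem norm_neg_div_norm_smul_le {E : Type*} [NormedAddCommGroup E] [NormedSpace ℝ E]
    {τ : ℝ} (hτ : 0 ≤ τ) (x : E) : ‖(-(τ / ‖x‖)) • x‖ ≤ τ := by
  rw [norm_smul, norm_neg, Real.norm_of_nonneg (by positivity)]
  rcases eq_or_ne ‖x‖ 0 with hx | hx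
  · simpa [hx] using hτ
  · rw [div_mul_cancel₀ τ hx]

namespace EuclideanSpace

variable {ι : Type*}

theorem ncard_support_le_of_forall_not_mem {T : Finset ι} {u : EuclideanSpace ℝ ι}
    (hu : ∀ i ∉ T, u i = 0) : {i | u i ≠ 0}.ncard ≤ T.card :=
  calc {i | u i ≠ 0}.ncard ≤ (T : Set ι).ncard :=
        Set.ncard_le_ncard (fun i hi => by_contra fun hiT => hi (hu i hiT)) T.finite_toSet
    _ = T.card := Set.ncard_coe_finset T

variable [DecidableEq ι]

/-- `restrictTo S g` is the paper's `g^topk` when `S` indexes the `k` largest entries of `g`. -/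
noncomputable def restrictTo (T : Finset ι) (x : EuclideanSpace ℝ ι) : EuclideanSpace ℝ ι :=
  WithLp.toLp 2 fun i => if i ∈ T then x i else 0

@[simp]
theorem restrictTo_apply (T : Finset ι) (x : EuclideanSpace ℝ ι) (i : ι) :
    restrictTo T x i = if i ∈ T then x i else 0 := rfl

variable [Fintype ι]

theorem norm_restrictTo_sq (T : Finset ι) (x : EuclideanSpace ℝ ι) :
    ‖restrictTo T x‖ ^ 2 = ∑ i ∈ T, x i ^ 2 := by
  simp [EuclideanSpace.norm_sq_eq, Finset.sum_ite_mem]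

theorem inner_restrictTo_self (T : Finset ι) (x : EuclideanSpace ℝ ι) :
    ⟪restrictTo T x, x⟫ = ‖restrictTo T x‖ ^ 2 := by
  rw [norm_restrictTo_sq]
  simp [PiLp.inner_apply, Finset.sum_ite_mem, sq]

theorem inner_neg_div_norm_smul_restrictTo_self (τ : ℝ) (T : Finset ι) (x : EuclideanSpace ℝ ι) :
    ⟪(-(τ / ‖restrictTo T x‖)) • restrictTo T x, x⟫ = -(τ * ‖restrictTo T x‖) := by
  rw [real_inner_smul_left, inner_restrictTo_self]
  rcases eq_or_ne ‖restrictTo T x‖ 0 with h | h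
  · simp [h]
  · field_simp

theorem inner_restrictTo_of_forall_not_mem {T : Finset ι} {u : EuclideanSpace ℝ ι}
    (hu : ∀ i ∉ T, u i = 0) (x : EuclideanSpace ℝ ι) : ⟪u, restrictTo T x⟫ = ⟪u, x⟫ := by
  simp only [PiLp.inner_apply, restrictTo_apply]
  refine Finset.sum_congr rfl fun i _ => ?_
  by_cases hi : i ∈ T <;> simp [hi, hu]

theorem norm_restrictTo_le_of_card_le {S T : Finset ι} {x : EuclideanSpace ℝ ι}
    (htop : ∀ i ∈ S, ∀ j ∉ S, |x j| ≤ |x i|) (hcard : T.card ≤ S.card) :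
    ‖restrictTo T x‖ ≤ ‖restrictTo S x‖ := by
  refine pow_le_pow_iff_left₀ (norm_nonneg _) (norm_nonneg _) two_ne_zero |>.1 ?_
  simp only [norm_restrictTo_sq, ← sq_abs (x _)]
  exact Finset.sum_le_sum_of_card_le_of_isTop (fun i => sq_nonneg _)
    (fun i hi j hj => pow_le_pow_left₀ (abs_nonneg _) (htop i hi j hj) 2) hcard

theorem neg_mul_norm_restrictTo_le_inner {S : Finset ι} {x u : EuclideanSpace ℝ ι} {τ : ℝ}
    (htop : ∀ i ∈ S, ∀ j ∉ S, |x j| ≤ |x i|) (hu_card : {i | u i ≠ 0}.ncard ≤ S.card)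
    (hu_norm : ‖u‖ ≤ τ) : -(τ * ‖restrictTo S x‖) ≤ ⟪u, x⟫ := by
  set T := Finset.univ.filter fun i => u i ≠ 0
  have hT_card : T.card ≤ S.card := by
    rwa [← Set.ncard_coe_finset, Finset.coe_filter_univ]
  have hu_supp : ∀ i ∉ T, u i = 0 := by simp [T]
  calc -(τ * ‖restrictTo S x‖) ≤ -(‖u‖ * ‖restrictTo T x‖) := by
        gcongr
        · exact (norm_nonneg u).trans hu_norm
        · exact norm_restrictTo_le_of_card_le htop hT_card
    _ ≤ ⟪u, restrictTo T x⟫ := neg_le_of_abs_le (abs_real_inner_le_norm _ _)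
    _ = ⟪u, x⟫ := inner_restrictTo_of_forall_not_mem hu_supp x

end EuclideanSpace

theorem kSupport_lmo_general (n k : ℕ)
    (τ : ℝ) (hτ : 0 < τ)
    (g : EuclideanSpace ℝ (Fin n))
    (S : Finset (Fin n)) (hScard : S.card = k)
    (htop : ∀ i ∈ S, ∀ j ∉ S, |g j| ≤ |g i|)
    (gtop : EuclideanSpace ℝ (Fin n))
    (hgtop : ∀ i, gtop i = if i ∈ S then g i else 0)
    (vstar : EuclideanSpace ℝ (Fin n))
    (hvstar : vstar = (-(τ / ‖gtop‖)) • gtop) :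
    vstar ∈ kSupportBall n k τ ∧
    (∀ v ∈ kSupportBall n k τ, ⟪vstar, g⟫ ≤ ⟪v, g⟫) ∧
    ⟪vstar, g⟫ = -(τ * ‖gtop‖) := by
  obtain rfl : gtop = EuclideanSpace.restrictTo S g := by ext i; exact hgtop i
  have hvalue : ⟪vstar, g⟫ = -(τ * ‖EuclideanSpace.restrictTo S g‖) :=
    hvstar ▸ EuclideanSpace.inner_neg_div_norm_smul_restrictTo_self τ S g
  refine ⟨subset_convexHull ℝ _ ⟨?_, ?_⟩, fun v hv => ?_, hvalue⟩
  · refine hScard ▸ EuclideanSpace.ncard_support_le_of_forall_not_mem fun i hi => ?_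
    simp [hvstar, hi]
  · exact hvstar ▸ norm_neg_div_norm_smul_le hτ.le _
  · exact hvalue ▸ le_inner_of_mem_convexHull
      (fun u hu => EuclideanSpace.neg_mul_norm_restrictTo_le_inner htop (hScard ▸ hu.1) hu.2) hv

/-- the LMO solution over the k-support norm ball. -/
theorem kSupport_lmo (n k : ℕ) (hn : 1 ≤ n) (hk1 : 1 ≤ k) (hkn : k ≤ n)
    (τ : ℝ) (hτ : 0 < τ)
    (g : EuclideanSpace ℝ (Fin n)) (hg : g ≠ 0)
    (S : Finset (Fin n)) (hScard : S.card = k)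
    (htop : ∀ i ∈ S, ∀ j ∉ S, |g j| ≤ |g i|)
    (gtop : EuclideanSpace ℝ (Fin n))
    (hgtop : ∀ i, gtop i = if i ∈ S then g i else 0)
    (vstar : EuclideanSpace ℝ (Fin n))
    (hvstar : vstar = (-(τ / ‖gtop‖)) • gtop) :
    vstar ∈ kSupportBall n k τ ∧
    (∀ v ∈ kSupportBall n k τ, ⟪vstar, g⟫ ≤ ⟪v, g⟫) ∧
    ⟪vstar, g⟫ = -(τ * ‖gtop‖) :=
  kSupport_lmo_general n k τ hτ g S hScard htop gtop hgtop vstar hvstar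
end

section
/- Let G ∈ ℝ^{n×m} be a nonzero matrix with singular value decomposition G = Σ_{i=1}^r u_i σ_i v_iᵀ, where σ₁ ≥ σ₂ ≥ … ≥ σ_r > 0 are the nonzero singular values of G with corresponding left singular vectors u_i ∈ ℝⁿ and right singular vectors v_i ∈ ℝᵐ. Let 1 ≤ k and τ > 0, and set s = min(k, r). Then the matrix W* = −(τ / √(σ₁² + … + σ_s²)) · Σ_{i=1}^s u_i σ_i v_iᵀ belongs to C_k^σ(τ) and satisfies ⟨W*, G⟩_F ≤ ⟨W, G⟩_F for every W ∈ C_k^σ(τ); moreover ⟨W*, G⟩_F = −τ√(σ₁² + … + σ_s²). -/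
/-!
Write a matrix `W` of rank at most `k` as `T * Q`, where `Q` has `d ≤ k` orthonormal rows. Then
`⟨W, G⟩ = ⟨T, G Qᵀ⟩ ≥ -‖T‖ ‖G Qᵀ‖ = -‖W‖ ‖G Qᵀ‖`, and `‖G Qᵀ‖² = ∑ σᵢ² wᵢ` with
`wᵢ = ‖Q vᵢ‖²`. Bessel's inequality, once for the rows of `Q` and once for the `vᵢ`, gives
`0 ≤ wᵢ ≤ 1` and `∑ wᵢ ≤ d ≤ k`; as the `σᵢ²` decrease, `∑ σᵢ² wᵢ ≤ σ₁² + ⋯ + σₖ²`. The resulting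
lower bound is linear in `W`, hence holds on the convex hull, and the truncated SVD attains it.
-/

/-- Frobenius inner product of two real matrices. -/
def frobInner {n m : ℕ} (A B : Matrix (Fin n) (Fin m) ℝ) : ℝ :=
  ∑ i, ∑ j, A i j * B i j

/-- Frobenius norm of a real matrix. -/
noncomputable def frobNorm {n m : ℕ} (A : Matrix (Fin n) (Fin m) ℝ) : ℝ :=
  Real.sqrt (∑ i, ∑ j, (A i j) ^ 2)

/-- The spectral-k-support norm ball of radius τ: the convex hull of all
matrices of rank at most k whose vector of singular values has Euclidean norm
(i.e. whose Frobenius norm) at most τ. -/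
noncomputable def spectralKSupportBall (n m k : ℕ) (τ : ℝ) :
    Set (Matrix (Fin n) (Fin m) ℝ) :=
  convexHull ℝ {W : Matrix (Fin n) (Fin m) ℝ | W.rank ≤ k ∧ frobNorm W ≤ τ}

open Matrix Finset

lemma of_mul_transpose_eq_one {ι κ R : Type*} [Fintype κ] [DecidableEq ι] [CommSemiring R]
    {u : ι → κ → R} (hu : ∀ i j, ∑ x, u i x * u j x = if i = j then 1 else 0) :
    of u * (of u)ᵀ = 1 := by
  ext i j
  simp [mul_apply, hu, one_apply]

lemma sum_smul_vecMulVec_eq_transpose_mul_diagonal_mul {ι α β R : Type*} [Fintype ι]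
    [DecidableEq ι] [CommSemiring R] (s : Finset ι) (a : ι → R) (u : ι → α → R)
    (v : ι → β → R) :
    ∑ i ∈ s, a i • vecMulVec (u i) (v i) =
      (of u)ᵀ * diagonal (fun i => if i ∈ s then a i else 0) * of v := by
  ext x y
  rw [mul_apply]
  simp [Matrix.sum_apply, vecMulVec_apply, mul_diagonal, ite_mul]
  exact sum_congr rfl fun i _ => by ring

lemma diag_mul_transpose_self_le_of_mul_transpose_eq_one {ι κ μ R : Type*} [Fintype κ]
    [Fintype μ] [DecidableEq μ] [CommRing R] [LinearOrder R] [IsStrictOrderedRing R]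
    {A : Matrix μ κ R} (hA : A * Aᵀ = 1) (B : Matrix ι κ R) :
    (B * Aᵀ * (B * Aᵀ)ᵀ).diag ≤ (B * Bᵀ).diag := by
  intro i
  set C := B - B * Aᵀ * A
  have hC : C * Cᵀ = B * Bᵀ - B * Aᵀ * (B * Aᵀ)ᵀ := by
    simp only [C, transpose_sub, transpose_mul, transpose_transpose, Matrix.sub_mul,
      Matrix.mul_sub, Matrix.mul_assoc]
    rw [← Matrix.mul_assoc A Aᵀ, hA, Matrix.one_mul]
    abel
  have hCC : 0 ≤ (C * Cᵀ) i i := sum_nonneg fun j _ => mul_self_nonneg (C i j)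
  rw [hC, Matrix.sub_apply, sub_nonneg] at hCC
  exact hCC

lemma trace_mul_transpose_le_of_mul_transpose_eq_one {ι κ : Type*} [Fintype ι] [Fintype κ]
    [DecidableEq ι] {d : ℕ} {V : Matrix ι κ ℝ} {Q : Matrix (Fin d) κ ℝ} (hV : V * Vᵀ = 1)
    (hQ : Q * Qᵀ = 1) :
    trace (V * Qᵀ * (V * Qᵀ)ᵀ) ≤ d :=
  calc trace (V * Qᵀ * (V * Qᵀ)ᵀ) = ∑ j, (Q * Vᵀ * (Q * Vᵀ)ᵀ) j j := by
        rw [trace_mul_comm]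
        simp only [trace, diag_apply, transpose_mul, transpose_transpose]
    _ ≤ ∑ j, (Q * Qᵀ) j j :=
        sum_le_sum fun j _ => diag_mul_transpose_self_le_of_mul_transpose_eq_one hV Q j
    _ = d := by simp [hQ]

lemma exists_eq_mul_orthonormal_rows {ι κ : Type*} [Fintype ι] [Fintype κ]
    (W : Matrix ι κ ℝ) :
    ∃ (d : ℕ) (T : Matrix ι (Fin d) ℝ) (Q : Matrix (Fin d) κ ℝ),
      d = W.rank ∧ Q * Qᵀ = 1 ∧ W = T * Q := by
  let K : Submodule ℝ (EuclideanSpace ℝ κ) :=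
    (Submodule.span ℝ (Set.range W.row)).map
      ((WithLp.linearEquiv 2 ℝ (κ → ℝ)).symm : (κ → ℝ) →ₗ[ℝ] EuclideanSpace ℝ κ)
  let b := stdOrthonormalBasis ℝ K
  have hmem : ∀ x, WithLp.toLp 2 (W x) ∈ K :=
    fun x => Submodule.mem_map_of_mem (Submodule.subset_span ⟨x, rfl⟩)
  refine ⟨_, of fun x j => inner ℝ (b j : EuclideanSpace ℝ κ) (WithLp.toLp 2 (W x)),
    of fun j y => (b j : EuclideanSpace ℝ κ) y, ?_, ?_, ?_⟩
  · rw [rank_eq_finrank_span_row, LinearEquiv.finrank_map_eq]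
  · ext j j'
    rw [mul_apply, one_apply, ← orthonormal_iff_ite.1 b.orthonormal j j']
    simp only [Submodule.coe_inner, PiLp.inner_apply, of_apply, transpose_apply,
      RCLike.inner_apply, conj_trivial]
    exact sum_congr rfl fun _ _ => mul_comm _ _
  · ext x y
    have := congrArg (fun z : K => (z : EuclideanSpace ℝ κ) y) (b.sum_repr' ⟨_, hmem x⟩)
    simpa [mul_apply] using this.symm

lemma sum_mul_le_sum_filter_lt_of_antitone {r k : ℕ} {a w : Fin r → ℝ} (ha : Antitone a)
    (ha0 : 0 ≤ a) (hw0 : 0 ≤ w) (hw1 : w ≤ 1) (hwk : ∑ i, w i ≤ k) :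
    ∑ i, a i * w i ≤ ∑ i ∈ univ.filter (fun i : Fin r => (i : ℕ) < k), a i := by
  -- With the threshold `c = a k`, both terms of
  -- `∑ a w - ∑_{i<k} a = ∑ (a - c) (w - e) + c (∑ w - k)` are nonpositive.
  set c := if h : k < r then a ⟨k, h⟩ else 0
  set e : Fin r → ℝ := fun i => if (i : ℕ) < k then 1 else 0
  have hsplit : ∀ i, (a i - c) * (w i - e i) ≤ 0 := by
    intro i
    by_cases hi : (i : ℕ) < k
    · have hc : c ≤ a i := by
        by_cases hk : k < r
        · simpa [c, hk] using ha (show i ≤ ⟨k, hk⟩ from hi.le)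
        · simpa [c, hk] using ha0 i
      simpa [e, hi] using mul_nonpos_of_nonneg_of_nonpos (sub_nonneg.2 hc) (sub_nonpos.2 (hw1 i))
    · have hk : k < r := (not_lt.1 hi).trans_lt i.isLt
      have hc : a i ≤ c := by simpa [c, hk] using ha (show ⟨k, hk⟩ ≤ i from not_lt.1 hi)
      simpa [e, hi] using mul_nonpos_of_nonpos_of_nonneg (sub_nonpos.2 hc) (hw0 i)
  have hc : c * (∑ i, w i - ∑ i, e i) ≤ 0 := by
    by_cases hk : k < r
    · have he : ∑ i, e i = k := by simp [e, Fin.card_filter_val_lt, hk.le]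
      rw [he]
      exact mul_nonpos_of_nonneg_of_nonpos (by simpa [c, hk] using ha0 ⟨k, hk⟩) (by linarith)
    · simp [c, hk]
  have hae : ∑ i ∈ univ.filter (fun i : Fin r => (i : ℕ) < k), a i = ∑ i, a i * e i := by
    simp [e, sum_filter]
  have hexpand : ∑ i, (a i - c) * (w i - e i) =
      ∑ i, a i * w i - ∑ i, a i * e i - c * (∑ i, w i - ∑ i, e i) := by
    simp only [sub_mul, mul_sub, sum_sub_distrib, mul_sum]
    ring
  linarith [sum_nonpos fun i (_ : i ∈ univ) => hsplit i]

lemma div_mul_sq_eq_mul (a b : ℝ) : a / b * b ^ 2 = a * b := by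
  rcases eq_or_ne b 0 with rfl | hb
  · simp
  · field_simp

lemma div_mul_le_of_nonneg {a : ℝ} (ha : 0 ≤ a) (b : ℝ) : a / b * b ≤ a := by
  rcases eq_or_ne b 0 with rfl | hb
  · simpa using ha
  · rw [div_mul_cancel₀ a hb]

lemma rank_mul_diagonal_ite_mul_le {ι κ μ K : Type*} [Fintype κ] [Fintype μ]
    [DecidableEq κ] [Field K]
    (A : Matrix ι κ K) (S : Finset κ) (w : κ → K) (B : Matrix κ μ K) :
    (A * diagonal (fun i => if i ∈ S then w i else 0) * B).rank ≤ #S := by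
  classical
  refine (rank_mul_le_left _ _).trans ((rank_mul_le_right _ _).trans ?_)
  rw [rank_diagonal, Fintype.card_subtype]
  exact card_le_card fun i hi => by by_contra h; simp [h] at hi

section Frobenius

variable {n m d r : ℕ}

lemma frobInner_eq_trace (A B : Matrix (Fin n) (Fin m) ℝ) : frobInner A B = trace (A * Bᵀ) := by
  simp [frobInner, trace, mul_apply]

lemma frobNorm_eq_sqrt_frobInner (A : Matrix (Fin n) (Fin m) ℝ) :
    frobNorm A = √(frobInner A A) := by
  simp only [frobNorm, frobInner, sq]

lemma neg_frobNorm_mul_frobNorm_le_frobInner (A B : Matrix (Fin n) (Fin m) ℝ) :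
    -(frobNorm A * frobNorm B) ≤ frobInner A B := by
  have := Real.sum_mul_le_sqrt_mul_sqrt univ (fun p : Fin n × Fin m => -A p.1 p.2)
    (fun p => B p.1 p.2)
  simp only [Fintype.sum_prod_type, neg_mul, sum_neg_distrib, neg_sq] at this
  rw [frobInner, frobNorm, frobNorm]
  linarith

lemma isLinearMap_frobInner_left (B : Matrix (Fin n) (Fin m) ℝ) :
    IsLinearMap ℝ (frobInner · B) :=
  ⟨fun _ _ => by simp [frobInner_eq_trace, Matrix.add_mul], fun _ _ => by simp [frobInner_eq_trace]⟩

lemma frobInner_mul_eq_frobInner_mul_transpose (A : Matrix (Fin n) (Fin d) ℝ)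
    (Q : Matrix (Fin d) (Fin m) ℝ) (B : Matrix (Fin n) (Fin m) ℝ) :
    frobInner (A * Q) B = frobInner A (B * Qᵀ) := by
  simp [frobInner_eq_trace, transpose_mul, Matrix.mul_assoc]

lemma frobInner_mul_mul_of_mul_transpose_eq_one {Q : Matrix (Fin d) (Fin m) ℝ}
    (hQ : Q * Qᵀ = 1) (A B : Matrix (Fin n) (Fin d) ℝ) :
    frobInner (A * Q) (B * Q) = frobInner A B := by
  simp [frobInner_eq_trace, transpose_mul, Matrix.mul_assoc, ← Matrix.mul_assoc Q, hQ]

lemma frobInner_transpose_mul_transpose_mul_of_mul_transpose_eq_one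
    {U : Matrix (Fin d) (Fin n) ℝ} (hU : U * Uᵀ = 1) (A B : Matrix (Fin d) (Fin m) ℝ) :
    frobInner (Uᵀ * A) (Uᵀ * B) = frobInner A B := by
  rw [frobInner_eq_trace, frobInner_eq_trace, transpose_mul, transpose_transpose,
    Matrix.mul_assoc, trace_mul_comm, Matrix.mul_assoc, Matrix.mul_assoc, hU, Matrix.mul_one]

lemma frobInner_diagonal_mul_diagonal_mul (a b : Fin n → ℝ) (A B : Matrix (Fin n) (Fin m) ℝ) :
    frobInner (diagonal a * A) (diagonal b * B) = ∑ i, a i * b i * (A * Bᵀ) i i := by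
  simp only [frobInner, diagonal_mul]
  simp only [mul_apply, transpose_apply, mul_sum]
  exact sum_congr rfl fun i _ => sum_congr rfl fun j _ => by ring

lemma frobInner_transpose_mul_diagonal_mul {U : Matrix (Fin r) (Fin n) ℝ}
    {V : Matrix (Fin r) (Fin m) ℝ} (hU : U * Uᵀ = 1) (hV : V * Vᵀ = 1) (a b : Fin r → ℝ) :
    frobInner (Uᵀ * diagonal a * V) (Uᵀ * diagonal b * V) = ∑ i, a i * b i := by
  rw [Matrix.mul_assoc, Matrix.mul_assoc,
    frobInner_transpose_mul_transpose_mul_of_mul_transpose_eq_one hU,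
    frobInner_diagonal_mul_diagonal_mul, hV]
  simp

lemma frobInner_transpose_mul_diagonal_ite_mul {U : Matrix (Fin r) (Fin n) ℝ}
    {V : Matrix (Fin r) (Fin m) ℝ} (hU : U * Uᵀ = 1) (hV : V * Vᵀ = 1) (S : Finset (Fin r))
    (c : ℝ) (σ : Fin r → ℝ) :
    frobInner (Uᵀ * diagonal (fun i => if i ∈ S then c * σ i else 0) * V)
      (Uᵀ * diagonal σ * V) = c * ∑ i ∈ S, σ i ^ 2 := by
  have h : ∀ i, (if i ∈ S then c * σ i else 0) * σ i = if i ∈ S then c * σ i ^ 2 else 0 :=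
    fun i => by split_ifs <;> ring
  simp only [frobInner_transpose_mul_diagonal_mul hU hV, h, sum_ite_mem, univ_inter, mul_sum]

lemma frobNorm_transpose_mul_diagonal_ite_mul {U : Matrix (Fin r) (Fin n) ℝ}
    {V : Matrix (Fin r) (Fin m) ℝ} (hU : U * Uᵀ = 1) (hV : V * Vᵀ = 1) (S : Finset (Fin r))
    (c : ℝ) (σ : Fin r → ℝ) :
    frobNorm (Uᵀ * diagonal (fun i => if i ∈ S then c * σ i else 0) * V) =
      |c| * √(∑ i ∈ S, σ i ^ 2) := by
  have h : ∀ i, (if i ∈ S then c * σ i else 0) * (if i ∈ S then c * σ i else 0) =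
      if i ∈ S then c ^ 2 * σ i ^ 2 else 0 :=
    fun i => by split_ifs <;> ring
  rw [frobNorm_eq_sqrt_frobInner, frobInner_transpose_mul_diagonal_mul hU hV]
  simp only [h, sum_ite_mem, univ_inter, ← mul_sum]
  rw [Real.sqrt_mul (sq_nonneg c), Real.sqrt_sq_eq_abs]

end Frobenius

lemma neg_frobNorm_mul_sqrt_le_frobInner_of_rank_le {n m r k : ℕ}
    {U : Matrix (Fin r) (Fin n) ℝ} {V : Matrix (Fin r) (Fin m) ℝ} (hU : U * Uᵀ = 1)
    (hV : V * Vᵀ = 1) {σ : Fin r → ℝ} (hσ : Antitone σ) (hσ0 : 0 ≤ σ)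
    {W : Matrix (Fin n) (Fin m) ℝ} (hW : W.rank ≤ k) :
    -(frobNorm W * √(∑ i ∈ univ.filter (fun i : Fin r => (i : ℕ) < k), σ i ^ 2)) ≤
      frobInner W (Uᵀ * diagonal σ * V) := by
  obtain ⟨d, T, Q, hd, hQ, rfl⟩ := exists_eq_mul_orthonormal_rows W
  rw [← hd] at hW
  set M := V * Qᵀ
  have hw0 : ∀ i, 0 ≤ (M * Mᵀ) i i := fun i => by
    rw [mul_apply]
    exact sum_nonneg fun j _ => mul_self_nonneg (M i j)
  have hw1 : ∀ i, (M * Mᵀ) i i ≤ 1 := fun i => by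
    simpa only [diag_apply, hV, one_apply_eq] using
      diag_mul_transpose_self_le_of_mul_transpose_eq_one hQ V i
  have hwk : ∑ i, (M * Mᵀ) i i ≤ k :=
    (trace_mul_transpose_le_of_mul_transpose_eq_one hV hQ).trans (by exact_mod_cast hW)
  have hGQ : frobNorm (Uᵀ * diagonal σ * V * Qᵀ) = √(∑ i, σ i ^ 2 * (M * Mᵀ) i i) := by
    rw [frobNorm_eq_sqrt_frobInner, Matrix.mul_assoc, Matrix.mul_assoc,
      frobInner_transpose_mul_transpose_mul_of_mul_transpose_eq_one hU,
      frobInner_diagonal_mul_diagonal_mul]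
    simp [M, sq]
  have hweights := sum_mul_le_sum_filter_lt_of_antitone (k := k)
    (fun i j h => pow_le_pow_left₀ (hσ0 j) (hσ h) 2) (fun i => sq_nonneg (σ i)) hw0 hw1 hwk
  calc -(frobNorm (T * Q) * √(∑ i ∈ univ.filter (fun i : Fin r => (i : ℕ) < k), σ i ^ 2))
      ≤ -(frobNorm T * frobNorm (Uᵀ * diagonal σ * V * Qᵀ)) := by
        rw [frobNorm_eq_sqrt_frobInner (T * Q), frobInner_mul_mul_of_mul_transpose_eq_one hQ,
          ← frobNorm_eq_sqrt_frobInner, hGQ]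
        exact neg_le_neg (mul_le_mul_of_nonneg_left (Real.sqrt_le_sqrt hweights)
          (Real.sqrt_nonneg _))
    _ ≤ frobInner T (Uᵀ * diagonal σ * V * Qᵀ) := neg_frobNorm_mul_frobNorm_le_frobInner _ _
    _ = frobInner (T * Q) (Uᵀ * diagonal σ * V) :=
        (frobInner_mul_eq_frobInner_mul_transpose _ _ _).symm

lemma neg_mul_sqrt_le_frobInner_of_mem_spectralKSupportBall {n m r k : ℕ}
    {U : Matrix (Fin r) (Fin n) ℝ} {V : Matrix (Fin r) (Fin m) ℝ} (hU : U * Uᵀ = 1)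
    (hV : V * Vᵀ = 1) {σ : Fin r → ℝ} (hσ : Antitone σ) (hσ0 : 0 ≤ σ) {τ : ℝ}
    {W : Matrix (Fin n) (Fin m) ℝ} (hW : W ∈ spectralKSupportBall n m k τ) :
    -(τ * √(∑ i ∈ univ.filter (fun i : Fin r => (i : ℕ) < k), σ i ^ 2)) ≤
      frobInner W (Uᵀ * diagonal σ * V) := by
  refine convexHull_min ?_ (convex_halfSpace_ge (isLinearMap_frobInner_left _) _) hW
  rintro W ⟨hrank, hnorm⟩
  exact (neg_le_neg (mul_le_mul_of_nonneg_right hnorm (Real.sqrt_nonneg _))).trans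
    (neg_frobNorm_mul_sqrt_le_frobInner_of_rank_le hU hV hσ hσ0 hrank)

theorem spectralKSupport_lmo_general (n m r k : ℕ)
    (τ : ℝ) (hτ : 0 < τ)
    (G : Matrix (Fin n) (Fin m) ℝ)
    (u : Fin r → Fin n → ℝ) (v : Fin r → Fin m → ℝ) (σ : Fin r → ℝ)
    (hu : ∀ i j : Fin r, ∑ x, u i x * u j x = if i = j then (1 : ℝ) else 0)
    (hv : ∀ i j : Fin r, ∑ x, v i x * v j x = if i = j then (1 : ℝ) else 0)
    (hσpos : ∀ i, 0 < σ i)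
    (hσdec : ∀ i j : Fin r, i ≤ j → σ j ≤ σ i)
    (hsvd : G = ∑ i, σ i • Matrix.vecMulVec (u i) (v i))
    (s : ℕ) (hs : s = min k r)
    (Wstar : Matrix (Fin n) (Fin m) ℝ)
    (hWstar : Wstar =
      (-(τ / Real.sqrt (∑ i ∈ Finset.univ.filter (fun i : Fin r => (i : ℕ) < s), σ i ^ 2))) •
        ∑ i ∈ Finset.univ.filter (fun i : Fin r => (i : ℕ) < s),
          σ i • Matrix.vecMulVec (u i) (v i)) :
    Wstar ∈ spectralKSupportBall n m k τ ∧
    (∀ W ∈ spectralKSupportBall n m k τ, frobInner Wstar G ≤ frobInner W G) ∧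
    frobInner Wstar G =
      -(τ * Real.sqrt (∑ i ∈ Finset.univ.filter (fun i : Fin r => (i : ℕ) < s), σ i ^ 2)) := by
  have hU := of_mul_transpose_eq_one hu
  have hV := of_mul_transpose_eq_one hv
  have hS : univ.filter (fun i : Fin r => (i : ℕ) < s) =
      univ.filter (fun i : Fin r => (i : ℕ) < k) :=
    filter_congr fun i _ => by simp [hs, i.isLt]
  rw [hS] at hWstar ⊢
  set S := univ.filter (fun i : Fin r => (i : ℕ) < k)
  set ρ := √(∑ i ∈ S, σ i ^ 2)
  have hG : G = (of u)ᵀ * diagonal σ * of v := by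
    simpa using hsvd.trans (sum_smul_vecMulVec_eq_transpose_mul_diagonal_mul univ σ u v)
  have hW : Wstar = (of u)ᵀ * diagonal (fun i => if i ∈ S then -(τ / ρ) * σ i else 0) * of v := by
    rw [hWstar, smul_sum]
    simp_rw [smul_smul]
    exact sum_smul_vecMulVec_eq_transpose_mul_diagonal_mul S _ u v
  have hval : frobInner Wstar G = -(τ * ρ) := by
    rw [hW, hG, frobInner_transpose_mul_diagonal_ite_mul hU hV,
      ← Real.sq_sqrt (sum_nonneg fun i _ => sq_nonneg (σ i)), neg_mul, div_mul_sq_eq_mul]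
  refine ⟨subset_convexHull ℝ _ ⟨?_, ?_⟩, fun W hW => ?_, hval⟩
  · rw [hW]
    exact (rank_mul_diagonal_ite_mul_le _ S _ _).trans
      (show #S ≤ k by simp [S, Fin.card_filter_val_lt])
  · rw [hW, frobNorm_transpose_mul_diagonal_ite_mul hU hV, abs_neg, abs_of_nonneg (by positivity)]
    exact div_mul_le_of_nonneg hτ.le ρ
  · rw [hval, hG]
    exact neg_mul_sqrt_le_frobInner_of_mem_spectralKSupportBall hU hV hσdec
      (fun i => (hσpos i).le) hW

/-- the LMO solution over the spectral-k-support norm ball. The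
nonzero matrix G is given by its singular value decomposition
G = ∑ i, σ i • u i (v i)ᵀ with orthonormal left/right singular vectors and
decreasing positive singular values; with s = min k r, the suitably rescaled
negative truncated s-SVD of G minimizes the Frobenius inner product with G over
the ball, with value −τ√(σ₁² + … + σ_s²). -/
theorem spectralKSupport_lmo (n m r k : ℕ) (hk : 1 ≤ k)
    (τ : ℝ) (hτ : 0 < τ)
    (G : Matrix (Fin n) (Fin m) ℝ) (hG : G ≠ 0)
    (u : Fin r → Fin n → ℝ) (v : Fin r → Fin m → ℝ) (σ : Fin r → ℝ)
    (hu : ∀ i j : Fin r, ∑ x, u i x * u j x = if i = j then (1 : ℝ) else 0)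
    (hv : ∀ i j : Fin r, ∑ x, v i x * v j x = if i = j then (1 : ℝ) else 0)
    (hσpos : ∀ i, 0 < σ i)
    (hσdec : ∀ i j : Fin r, i ≤ j → σ j ≤ σ i)
    (hsvd : G = ∑ i, σ i • Matrix.vecMulVec (u i) (v i))
    (s : ℕ) (hs : s = min k r)
    (Wstar : Matrix (Fin n) (Fin m) ℝ)
    (hWstar : Wstar =
      (-(τ / Real.sqrt (∑ i ∈ Finset.univ.filter (fun i : Fin r => (i : ℕ) < s), σ i ^ 2))) •
        ∑ i ∈ Finset.univ.filter (fun i : Fin r => (i : ℕ) < s),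
          σ i • Matrix.vecMulVec (u i) (v i)) :
    Wstar ∈ spectralKSupportBall n m k τ ∧
    (∀ W ∈ spectralKSupportBall n m k τ, frobInner Wstar G ≤ frobInner W G) ∧
    frobInner Wstar G =
      -(τ * Real.sqrt (∑ i ∈ Finset.univ.filter (fun i : Fin r => (i : ℕ) < s), σ i ^ 2)) :=
  spectralKSupport_lmo_general n m r k τ hτ G u v σ hu hv hσpos hσdec hsvd s hs Wstar hWstar
end

section
/- Let n ≥ 1, 1 ≤ k ≤ n and τ > 0. The k-sparse polytope P_k(τ), defined as the convex hull of all vectors v ∈ {0, τ, −τ}ⁿ with at most k nonzero entries, equals the set {x ∈ ℝⁿ : max(‖x‖_∞, ‖x‖₁/k) ≤ τ}; that is, P_k(τ) is the ball of radius τ with respect to the norm x ↦ max{‖x‖_∞, ‖x‖₁/k}. -/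
/-- The k-sparse polytope of radius τ in ℝⁿ: the convex hull of all vectors
with entries in {0, τ, −τ} and at most k nonzero entries. -/
noncomputable def kSparsePolytope (n k : ℕ) (τ : ℝ) : Set (EuclideanSpace ℝ (Fin n)) :=
  convexHull ℝ {v : EuclideanSpace ℝ (Fin n) |
    (∀ i, v i = 0 ∨ v i = τ ∨ v i = -τ) ∧ {i | v i ≠ 0}.ncard ≤ k}

/-!
Let `B = {x | ‖x‖_∞ ≤ τ, ‖x‖₁ ≤ kτ}`. The vertices lie in `B` and `B` is convex, so one inclusion
is clear. Conversely `B` is compact and convex, so by Krein–Milman it is the closure of the convex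
hull of its extreme points, and it suffices to show that every extreme point is a vertex, i.e. has
no coordinate with `0 < |xᵢ| < τ`. Two such coordinates can be pushed in opposite directions
without changing `‖x‖₁`; if there is only one, the other coordinates contribute a multiple of `τ`
to `‖x‖₁ ≤ kτ`, which leaves room to move it alone. Either way `x` is the midpoint of two points
of `B`.
-/

open Finset Set

lemma eq_zero_of_add_mem_of_sub_mem_of_mem_extremePoints {𝕜 E : Type*} [Field 𝕜] [LinearOrder 𝕜]
    [IsStrictOrderedRing 𝕜] [AddCommGroup E] [Module 𝕜 E] {A : Set E} {x d : E}
    (hx : x ∈ A.extremePoints 𝕜) (hadd : x + d ∈ A) (hsub : x - d ∈ A) : d = 0 := by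
  have : Invertible (2 : 𝕜) := invertibleOfNonzero two_ne_zero
  simpa using hx.2 hadd hsub (mem_openSegment_add_sub (𝕜 := 𝕜) x d)

lemma sum_abs_eq_card_mul {ι : Type*} {x : ι → ℝ} {τ : ℝ} (s : Finset ι)
    (hx : ∀ i ∈ s, x i = 0 ∨ |x i| = τ) : ∑ i ∈ s, |x i| = #{i ∈ s | x i ≠ 0} * τ := by
  rw [← nsmul_eq_mul, ← sum_const, sum_filter]
  refine sum_congr rfl fun i hi => ?_
  split_ifs with h0
  · exact (hx i hi).resolve_left h0
  · simp [not_not.1 h0]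

section SparseBall

variable {ι : Type*} [Fintype ι] {k : ℕ} {τ : ℝ}

variable (ι k τ) in
def sparseVertices : Set (ι → ℝ) :=
  {v | (∀ i, v i = 0 ∨ v i = τ ∨ v i = -τ) ∧ {i | v i ≠ 0}.ncard ≤ k}

variable (ι k τ) in
def sparseBall : Set (ι → ℝ) :=
  {x | (∀ i, |x i| ≤ τ) ∧ ∑ i, |x i| ≤ k * τ}

lemma mem_sparseVertices_iff (hτ : 0 < τ) {v : ι → ℝ} :
    v ∈ sparseVertices ι k τ ↔ (∀ i, v i = 0 ∨ |v i| = τ) ∧ ∑ i, |v i| ≤ k * τ := by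
  have hcoord : (∀ i, v i = 0 ∨ v i = τ ∨ v i = -τ) ↔ ∀ i, v i = 0 ∨ |v i| = τ :=
    forall_congr' fun i => by rw [abs_eq hτ.le]
  have hncard : {i | v i ≠ 0}.ncard = #{i | v i ≠ 0} := by
    rw [Set.ncard_eq_toFinset_card']
    simp
  simp only [sparseVertices, mem_ofPred_eq, hcoord, hncard]
  refine and_congr_right fun hv => ?_
  rw [sum_abs_eq_card_mul _ fun i _ => hv i, mul_le_mul_iff_left₀ hτ, Nat.cast_le]

lemma sparseVertices_finite : (sparseVertices ι k τ).Finite := by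
  refine (Set.Finite.pi (t := fun _ => ({0, τ, -τ} : Set ℝ)) fun _ => by simp).subset ?_
  intro v hv i _
  simpa using hv.1 i

lemma sparseVertices_subset_sparseBall (hτ : 0 < τ) :
    sparseVertices ι k τ ⊆ sparseBall ι k τ := by
  intro v hv
  obtain ⟨hv, hsum⟩ := (mem_sparseVertices_iff hτ).1 hv
  refine ⟨fun i => ?_, hsum⟩
  rcases hv i with h | h <;> simp [h, hτ.le]

lemma convex_sparseBall : Convex ℝ (sparseBall ι k τ) := by
  intro x hx y hy a b ha hb hab
  have hcoord : ∀ i, |(a • x + b • y) i| ≤ a * |x i| + b * |y i| := fun i => by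
    simpa [abs_mul, abs_of_nonneg ha, abs_of_nonneg hb] using abs_add_le (a * x i) (b * y i)
  refine ⟨fun i => (hcoord i).trans ?_, (sum_le_sum fun i _ => hcoord i).trans ?_⟩
  · calc _ ≤ a * τ + b * τ := by gcongr; exacts [hx.1 i, hy.1 i]
      _ = τ := by rw [← add_mul, hab, one_mul]
  · calc _ = a * ∑ i, |x i| + b * ∑ i, |y i| := by rw [sum_add_distrib, mul_sum, mul_sum]
      _ ≤ a * (k * τ) + b * (k * τ) := by gcongr; exacts [hx.2, hy.2]
      _ = k * τ := by rw [← add_mul, hab, one_mul]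

lemma isCompact_sparseBall : IsCompact (sparseBall ι k τ) := by
  refine (isCompact_univ_pi fun _ => isCompact_Icc (a := -τ) (b := τ)).of_isClosed_subset ?_
    fun x hx i _ => abs_le.1 (hx.1 i)
  have hball : sparseBall ι k τ = (⋂ i, {x | |x i| ≤ τ}) ∩ {x | ∑ i, |x i| ≤ k * τ} := by
    ext; simp [sparseBall]
  rw [hball]
  exact (isClosed_iInter fun i => isClosed_le (by fun_prop) continuous_const).inter
    (isClosed_le (by fun_prop) continuous_const)

lemma add_mul_mem_sparseBall {x w : ι → ℝ} (hw : ∀ i, -1 ≤ w i)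
    (hbound : ∀ i, (1 + w i) * |x i| ≤ τ) (hsum : ∑ i, (1 + w i) * |x i| ≤ k * τ) :
    x + w * x ∈ sparseBall ι k τ := by
  have habs : ∀ i, |(x + w * x) i| = (1 + w i) * |x i| := fun i => by
    rw [Pi.add_apply, Pi.mul_apply, ← one_add_mul, abs_mul, abs_of_nonneg (by linarith [hw i])]
  simp only [sparseBall, mem_ofPred_eq, habs]
  exact ⟨hbound, hsum⟩

lemma mul_eq_zero_of_mem_extremePoints_sparseBall {x w : ι → ℝ}
    (hx : x ∈ (sparseBall ι k τ).extremePoints ℝ) (hw : ∀ i, |w i| ≤ 1)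
    (hbound : ∀ i, (1 + |w i|) * |x i| ≤ τ) (hsum : ∑ i, |x i| + |(∑ i, w i * |x i|)| ≤ k * τ) :
    w * x = 0 := by
  set S := ∑ i, w i * |x i|
  have hperturb (s : ℝ) : ∑ i, (1 + s * w i) * |x i| = ∑ i, |x i| + s * S := by
    simp only [S, add_mul, one_mul, mul_assoc, sum_add_distrib, mul_sum]
  refine eq_zero_of_add_mem_of_sub_mem_of_mem_extremePoints hx ?_ ?_
  · refine add_mul_mem_sparseBall (fun i => (abs_le.1 (hw i)).1)
      (fun i => le_trans ?_ (hbound i)) ?_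
    · gcongr; exact le_abs_self _
    · simpa using (hperturb 1).trans_le (by linarith [le_abs_self S])
  · rw [sub_eq_add_neg, ← neg_mul]
    refine add_mul_mem_sparseBall (fun i => neg_le_neg (abs_le.1 (hw i)).2)
      (fun i => le_trans ?_ (hbound i)) ?_
    · gcongr; exact neg_le_abs _
    · simpa using (hperturb (-1)).trans_le (by linarith [neg_abs_le S])

/-- The perturbation is `xᵢ ↦ xᵢ ± ε cᵢ sign xᵢ`, which changes `|xᵢ|` by `± ε cᵢ`. -/
lemma eq_zero_of_mem_extremePoints_sparseBall {x c : ι → ℝ} {ε : ℝ}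
    (hx : x ∈ (sparseBall ι k τ).extremePoints ℝ) (hε : 0 < ε) (hc : ∀ i, |c i| ≤ 1)
    (hmargin : ∀ i, c i ≠ 0 → ε ≤ min |x i| (τ - |x i|))
    (hsum : ∑ i, |x i| + ε * |(∑ i, c i)| ≤ k * τ) : c = 0 := by
  set w : ι → ℝ := fun i => ε * c i / |x i|
  have hwx (i : ι) : w i * |x i| = ε * c i := by
    by_cases h : c i = 0
    · simp [w, h]
    · have : |x i| ≠ 0 := by linarith [le_min_iff.1 (hmargin i h)]
      exact div_mul_cancel₀ _ this
  have hw (i : ι) : |w i| ≤ 1 ∧ (1 + |w i|) * |x i| ≤ τ := by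
    by_cases h : c i = 0
    · simp [w, h, (extremePoints_subset hx).1 i]
    · obtain ⟨hεx, hxτ⟩ := le_min_iff.1 (hmargin i h)
      have hwx' : |w i| * |x i| = ε * |c i| := by
        rw [← abs_abs (x i), ← abs_mul, hwx, abs_mul, abs_of_pos hε]
      have hεc : ε * |c i| ≤ ε := mul_le_of_le_one_right hε.le (hc i)
      exact ⟨le_of_mul_le_mul_right (by linarith) (hε.trans_le hεx), by linarith⟩
  have hwx_zero := mul_eq_zero_of_mem_extremePoints_sparseBall hx (fun i => (hw i).1)
    (fun i => (hw i).2) (by simpa [hwx, ← mul_sum, abs_mul, abs_of_pos hε] using hsum)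
  funext i
  have hεc : ε * c i = 0 := by
    rw [← hwx]
    rcases mul_eq_zero.1 (congrFun hwx_zero i) with h | h <;> simp [h]
  simpa [hε.ne'] using hεc

lemma eq_of_mem_extremePoints_sparseBall {x : ι → ℝ}
    (hx : x ∈ (sparseBall ι k τ).extremePoints ℝ) {i j : ι} (hi0 : 0 < |x i|) (hiτ : |x i| < τ)
    (hj0 : 0 < |x j|) (hjτ : |x j| < τ) : i = j := by
  classical
  by_contra hij
  have hc := eq_zero_of_mem_extremePoints_sparseBall hx (c := Pi.single i 1 - Pi.single j 1)
    (ε := min (min |x i| (τ - |x i|)) (min |x j| (τ - |x j|)))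
    (lt_min (lt_min hi0 (by linarith)) (lt_min hj0 (by linarith)))
    (fun l => by
      rcases eq_or_ne l i with rfl | hli <;> rcases eq_or_ne l j with rfl | hlj <;> simp [*])
    (fun l hl => by
      rcases eq_or_ne l i with rfl | hli
      · exact min_le_left _ _
      rcases eq_or_ne l j with rfl | hlj
      · exact min_le_right _ _
      · simp [hli, hlj] at hl)
    (by simpa [sum_sub_distrib] using (extremePoints_subset hx).2)
  simpa [hij] using congrFun hc i

lemma abs_eq_of_mem_extremePoints_sparseBall {x : ι → ℝ}
    (hx : x ∈ (sparseBall ι k τ).extremePoints ℝ) (hslack : ∑ j, |x j| < k * τ) {i : ι}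
    (hi : x i ≠ 0) : |x i| = τ := by
  classical
  refine ((extremePoints_subset hx).1 i).eq_of_not_lt fun hiτ => one_ne_zero (α := ℝ) ?_
  have hc := eq_zero_of_mem_extremePoints_sparseBall hx (c := Pi.single i 1)
    (ε := min (min |x i| (τ - |x i|)) (k * τ - ∑ l, |x l|))
    (lt_min (lt_min (abs_pos.2 hi) (by linarith)) (by linarith))
    (fun l => by rcases eq_or_ne l i with rfl | hli <;> simp [*])
    (fun l hl => by
      rcases eq_or_ne l i with rfl | hli
      · exact min_le_left _ _
      · simp [hli] at hl)
    (by simp; linarith [min_le_right (min |x i| (τ - |x i|)) (k * τ - ∑ l, |x l|)])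
  simpa using congrFun hc i

lemma sum_abs_lt_of_abs_lt_of_forall_ne {x : ι → ℝ} (hx : x ∈ sparseBall ι k τ) {i : ι}
    (hi0 : 0 < |x i|) (hiτ : |x i| < τ) (hothers : ∀ j ≠ i, x j = 0 ∨ |x j| = τ) :
    ∑ j, |x j| < k * τ := by
  classical
  set m := #{j ∈ univ.erase i | x j ≠ 0}
  have hsplit : ∑ j, |x j| = m * τ + |x i| := by
    rw [← sum_erase_add _ _ (mem_univ i),
      sum_abs_eq_card_mul _ fun j hj => hothers j (ne_of_mem_erase hj)]
  have hmk : (m + 1 : ℝ) ≤ k := by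
    have : (m : ℝ) * τ < k * τ := by linarith [hx.2]
    exact_mod_cast lt_of_mul_lt_mul_right this (by linarith)
  calc ∑ j, |x j| < (m + 1) * τ := by linarith
    _ ≤ k * τ := by gcongr; linarith

lemma eq_zero_or_abs_eq_of_mem_extremePoints_sparseBall {x : ι → ℝ}
    (hx : x ∈ (sparseBall ι k τ).extremePoints ℝ) (i : ι) : x i = 0 ∨ |x i| = τ := by
  have hxB := extremePoints_subset hx
  have hfrac (j : ι) (hj : ¬(x j = 0 ∨ |x j| = τ)) : 0 < |x j| ∧ |x j| < τ :=
    ⟨abs_pos.2 (not_or.1 hj).1, (hxB.1 j).lt_of_ne (not_or.1 hj).2⟩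
  by_contra hi
  obtain ⟨hi0, hiτ⟩ := hfrac i hi
  have hj (j : ι) (hji : j ≠ i) : x j = 0 ∨ |x j| = τ := by
    by_contra hj
    exact hji (eq_of_mem_extremePoints_sparseBall hx (hfrac j hj).1 (hfrac j hj).2 hi0 hiτ)
  exact hi (.inr (abs_eq_of_mem_extremePoints_sparseBall hx
    (sum_abs_lt_of_abs_lt_of_forall_ne hxB hi0 hiτ hj) (abs_pos.1 hi0)))

lemma extremePoints_sparseBall_subset (hτ : 0 < τ) :
    (sparseBall ι k τ).extremePoints ℝ ⊆ sparseVertices ι k τ := fun _ hx =>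
  (mem_sparseVertices_iff hτ).2
    ⟨eq_zero_or_abs_eq_of_mem_extremePoints_sparseBall hx, (extremePoints_subset hx).2⟩

theorem convexHull_sparseVertices (hτ : 0 < τ) :
    convexHull ℝ (sparseVertices ι k τ) = sparseBall ι k τ := by
  refine (convexHull_min (sparseVertices_subset_sparseBall hτ) convex_sparseBall).antisymm ?_
  calc sparseBall ι k τ
      = closure (convexHull ℝ ((sparseBall ι k τ).extremePoints ℝ)) :=
        (closure_convexHull_extremePoints isCompact_sparseBall convex_sparseBall).symm
    _ ⊆ closure (convexHull ℝ (sparseVertices ι k τ)) :=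
        closure_mono (convexHull_mono (extremePoints_sparseBall_subset hτ))
    _ = convexHull ℝ (sparseVertices ι k τ) :=
        (sparseVertices_finite.isClosed_convexHull ℝ).closure_eq

end SparseBall

theorem kSparsePolytope_eq_ball_general (n k : ℕ) (hk1 : 1 ≤ k)
    (τ : ℝ) (hτ : 0 < τ) :
    kSparsePolytope n k τ =
      {x : EuclideanSpace ℝ (Fin n) |
        max (⨆ i, |x i|) ((∑ i, |x i|) / (k : ℝ)) ≤ τ} := by
  have hk : (0 : ℝ) < k := by exact_mod_cast hk1
  let e := WithLp.linearEquiv 2 ℝ (Fin n → ℝ)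
  have hpolytope : kSparsePolytope n k τ = e ⁻¹' sparseBall (Fin n) k τ :=
    calc kSparsePolytope n k τ = convexHull ℝ (e.symm '' sparseVertices (Fin n) k τ) := by
          rw [e.image_symm_eq_preimage]; rfl
      _ = e.symm '' convexHull ℝ (sparseVertices (Fin n) k τ) :=
          (e.symm.toLinearMap.image_convexHull _).symm
      _ = e ⁻¹' sparseBall (Fin n) k τ := by
          rw [convexHull_sparseVertices hτ, e.image_symm_eq_preimage]
  rw [hpolytope]
  ext x
  have hsup : (⨆ i, |x i|) ≤ τ ↔ ∀ i, |x i| ≤ τ :=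
    ⟨fun h i => (le_ciSup (finite_range _).bddAbove i).trans h, fun h => Real.iSup_le h hτ.le⟩
  rw [mem_ofPred_eq, max_le_iff, hsup, div_le_iff₀ hk, mul_comm]
  rfl

/-- the k-sparse polytope P_k(τ) equals the ball of radius τ of
the norm x ↦ max{‖x‖_∞, ‖x‖₁/k}. -/
theorem kSparsePolytope_eq_ball (n k : ℕ) (hn : 1 ≤ n) (hk1 : 1 ≤ k) (hkn : k ≤ n)
    (τ : ℝ) (hτ : 0 < τ) :
    kSparsePolytope n k τ =
      {x : EuclideanSpace ℝ (Fin n) |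
        max (⨆ i, |x i|) ((∑ i, |x i|) / (k : ℝ)) ≤ τ} :=
  kSparsePolytope_eq_ball_general n k hk1 τ hτ
end

section
/- Let n ≥ 1, g ∈ ℝⁿ, 1 ≤ k ≤ n and τ > 0. Let S ⊆ {1,…,n} be a set of k indices such that |g_i| ≥ |g_j| for all i ∈ S and j ∉ S. Then the vector v* defined by (v*)_i = −τ·sign(g_i) for i ∈ S and (v*)_i = 0 otherwise belongs to P_k(τ) and satisfies ⟨v*, g⟩ ≤ ⟨v, g⟩ for every v ∈ P_k(τ). -/
/-!
A linear functional attains its minimum over a convex hull at a generating point, so it suffices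
to compare `v*` with the vertices `w` of `P_k(τ)`. Such a `w` has entries of size at most `τ`
supported on a set `T` of at most `k` coordinates, hence
`⟪w, g⟫ ≥ -τ ∑_{i ∈ T} |g i| ≥ -τ ∑_{i ∈ S} |g i| = ⟪v*, g⟫`,
the middle step because `S` collects `k` largest magnitudes `|g i|`.
-/

open RealInnerProductSpace

theorem Real.sign_mul_self (x : ℝ) : Real.sign x * x = |x| := by
  rcases lt_trichotomy x 0 with h | rfl | h
  · rw [Real.sign_of_neg h, abs_of_neg h, neg_one_mul]
  · simp
  · rw [Real.sign_of_pos h, abs_of_pos h, one_mul]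

namespace Finset

variable {ι α : Type*} [DecidableEq ι] [AddCommMonoid α] [LinearOrder α] [IsOrderedAddMonoid α]

theorem sum_le_sum_of_card_le_of_forall_le_s6 {f : ι → α} {S T : Finset ι} (hcard : #T ≤ #S)
    (hf : ∀ i ∈ S, 0 ≤ f i) (htop : ∀ i ∈ S, ∀ j ∉ S, f j ≤ f i) :
    ∑ i ∈ T, f i ≤ ∑ i ∈ S, f i := by
  have hcard_sdiff : #(T \ S) ≤ #(S \ T) := by
    have := card_inter_add_card_sdiff T S
    have := card_inter_add_card_sdiff S T
    rw [inter_comm] at this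
    omega
  have hdiff : ∑ i ∈ T \ S, f i ≤ ∑ i ∈ S \ T, f i := by
    rcases (S \ T).eq_empty_or_nonempty with hempty | hne
    · rw [hempty, card_empty, Nat.le_zero, card_eq_zero] at hcard_sdiff
      simp [hempty, hcard_sdiff]
    obtain ⟨m, hm, hmin⟩ := exists_min_image (S \ T) f hne
    have hmS : m ∈ S := (mem_sdiff.mp hm).1
    calc ∑ i ∈ T \ S, f i
        ≤ #(T \ S) • f m :=
          sum_le_card_nsmul _ _ _ fun j hj => htop m hmS j (mem_sdiff.mp hj).2
      _ ≤ #(S \ T) • f m := nsmul_le_nsmul_left (hf m hmS) hcard_sdiff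
      _ ≤ ∑ i ∈ S \ T, f i := card_nsmul_le_sum _ _ _ hmin
  rw [← sum_inter_add_sum_sdiff T S, ← sum_inter_add_sum_sdiff S T, inter_comm]
  gcongr

end Finset

namespace EuclideanSpace

variable {ι : Type*} [Fintype ι]

theorem real_inner_eq_sum (v g : EuclideanSpace ℝ ι) : ⟪v, g⟫ = ∑ i, v i * g i := by
  simp [PiLp.inner_apply, mul_comm]

theorem real_inner_eq_neg_mul_sum_abs [DecidableEq ι] {τ : ℝ} {g v : EuclideanSpace ℝ ι}
    {S : Finset ι} (hv : ∀ i, v i = if i ∈ S then -τ * Real.sign (g i) else 0) :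
    ⟪v, g⟫ = -(τ * ∑ i ∈ S, |g i|) := by
  simp_rw [real_inner_eq_sum, hv, ite_mul, zero_mul, Finset.sum_ite_mem, Finset.univ_inter,
    Finset.mul_sum, ← Finset.sum_neg_distrib, mul_assoc, Real.sign_mul_self, neg_mul]

theorem neg_mul_sum_abs_le_real_inner [DecidableEq ι] {τ : ℝ} (hτ : 0 ≤ τ)
    {g w : EuclideanSpace ℝ ι} {S : Finset ι} (htop : ∀ i ∈ S, ∀ j ∉ S, |g j| ≤ |g i|)
    (hw : ∀ i, |w i| ≤ τ) (hsupp : {i | w i ≠ 0}.ncard ≤ S.card) :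
    -(τ * ∑ i ∈ S, |g i|) ≤ ⟪w, g⟫ := by
  set T := Finset.univ.filter fun i => w i ≠ 0
  have hT : T.card ≤ S.card := by
    rwa [Set.ncard_eq_toFinset_card', Set.toFinset_ofPred] at hsupp
  have hsum : ⟪w, g⟫ = ∑ i ∈ T, w i * g i := by
    rw [real_inner_eq_sum, Finset.sum_filter_of_ne]
    exact fun i _ h => left_ne_zero_of_mul h
  calc -(τ * ∑ i ∈ S, |g i|)
      ≤ -(τ * ∑ i ∈ T, |g i|) := by
        refine neg_le_neg (mul_le_mul_of_nonneg_left ?_ hτ)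
        exact Finset.sum_le_sum_of_card_le_of_forall_le_s6 hT (fun _ _ => abs_nonneg _) htop
    _ = ∑ i ∈ T, -(τ * |g i|) := by rw [Finset.mul_sum, Finset.sum_neg_distrib]
    _ ≤ ∑ i ∈ T, w i * g i := Finset.sum_le_sum fun i _ => by
        calc -(τ * |g i|) ≤ -(|w i| * |g i|) := neg_le_neg (by gcongr; exact hw i)
          _ = -|w i * g i| := by rw [abs_mul]
          _ ≤ w i * g i := neg_abs_le _
    _ = ⟪w, g⟫ := hsum.symm

end EuclideanSpace

def kSparseVertices (n k : ℕ) (τ : ℝ) : Set (EuclideanSpace ℝ (Fin n)) :=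
  {v | (∀ i, v i = 0 ∨ v i = τ ∨ v i = -τ) ∧ {i | v i ≠ 0}.ncard ≤ k}

theorem kSparsePolytope_eq_convexHull (n k : ℕ) (τ : ℝ) :
    kSparsePolytope n k τ = convexHull ℝ (kSparseVertices n k τ) := rfl

theorem abs_le_of_mem_kSparseVertices {n k : ℕ} {τ : ℝ} (hτ : 0 ≤ τ)
    {v : EuclideanSpace ℝ (Fin n)} (hv : v ∈ kSparseVertices n k τ) (i : Fin n) : |v i| ≤ τ := by
  rcases hv.1 i with h | h | h <;> simp [h, abs_of_nonneg hτ, hτ]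

theorem mem_kSparseVertices_of_eq_ite {n k : ℕ} {τ : ℝ} {g v : EuclideanSpace ℝ (Fin n)}
    {S : Finset (Fin n)} (hS : S.card ≤ k)
    (hv : ∀ i, v i = if i ∈ S then -τ * Real.sign (g i) else 0) :
    v ∈ kSparseVertices n k τ := by
  refine ⟨fun i => ?_, ?_⟩
  · rw [hv i]
    split_ifs
    · rcases Real.sign_apply_eq (g i) with h | h | h <;> simp [h]
    · exact Or.inl rfl
  · calc {i | v i ≠ 0}.ncard ≤ (S : Set (Fin n)).ncard :=
          Set.ncard_le_ncard (fun i hi => by by_contra h; simp_all) S.finite_toSet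
      _ ≤ k := by rwa [Set.ncard_coe_finset]

theorem kSparsePolytope_lmo_general (n k : ℕ)
    (τ : ℝ) (hτ : 0 < τ)
    (g : EuclideanSpace ℝ (Fin n))
    (S : Finset (Fin n)) (hScard : S.card = k)
    (htop : ∀ i ∈ S, ∀ j ∉ S, |g j| ≤ |g i|)
    (vstar : EuclideanSpace ℝ (Fin n))
    (hvstar : ∀ i, vstar i = if i ∈ S then -τ * Real.sign (g i) else 0) :
    vstar ∈ kSparsePolytope n k τ ∧
    ∀ v ∈ kSparsePolytope n k τ, ⟪vstar, g⟫ ≤ ⟪v, g⟫ := by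
  rw [kSparsePolytope_eq_convexHull]
  refine ⟨subset_convexHull ℝ _ (mem_kSparseVertices_of_eq_ite hScard.le hvstar), fun v hv => ?_⟩
  obtain ⟨w, hw, hwv⟩ :=
    ((innerₛₗ ℝ g).concaveOn convex_univ).exists_le_of_mem_convexHull (Set.subset_univ _) hv
  have hw_le : ⟪vstar, g⟫ ≤ ⟪w, g⟫ := by
    rw [EuclideanSpace.real_inner_eq_neg_mul_sum_abs hvstar]
    exact EuclideanSpace.neg_mul_sum_abs_le_real_inner hτ.le htop
      (abs_le_of_mem_kSparseVertices hτ.le hw) (hScard ▸ hw.2)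
  simp only [innerₛₗ_apply_apply, real_inner_comm w g, real_inner_comm v g] at hwv
  exact hw_le.trans hwv

/-- the LMO solution over the k-sparse polytope. If S is a set of
k indices of largest-magnitude entries of g, then the vector with entries
−τ·sign(g_i) on S and 0 elsewhere lies in P_k(τ) and minimizes ⟨·, g⟩ over
P_k(τ). -/
theorem kSparsePolytope_lmo (n k : ℕ) (hn : 1 ≤ n) (hk1 : 1 ≤ k) (hkn : k ≤ n)
    (τ : ℝ) (hτ : 0 < τ)
    (g : EuclideanSpace ℝ (Fin n))
    (S : Finset (Fin n)) (hScard : S.card = k)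
    (htop : ∀ i ∈ S, ∀ j ∉ S, |g j| ≤ |g i|)
    (vstar : EuclideanSpace ℝ (Fin n))
    (hvstar : ∀ i, vstar i = if i ∈ S then -τ * Real.sign (g i) else 0) :
    vstar ∈ kSparsePolytope n k τ ∧
    ∀ v ∈ kSparsePolytope n k τ, ⟪vstar, g⟫ ≤ ⟪v, g⟫ :=
  kSparsePolytope_lmo_general n k τ hτ g S hScard htop vstar hvstar
end

section
/- Let n ≥ 1, 1 ≤ k ≤ n and τ > 0. The (k, ∞)-support norm ball C_{(k,∞)}(τ) = conv{v ∈ ℝⁿ : ‖v‖₀ ≤ k, ‖v‖_∞ ≤ τ} coincides with the k-sparse polytope P_k(τ) = conv{v ∈ {0, τ, −τ}ⁿ : ‖v‖₀ ≤ k}; i.e., conv{v ∈ ℝⁿ : ‖v‖₀ ≤ k, ‖v‖_∞ ≤ τ} = conv{v ∈ {0, τ, −τ}ⁿ : ‖v‖₀ ≤ k}. -/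
/-!
Every vector of the box `[-τ, τ]ⁿ` is a convex combination of the sign vectors `w ∈ {0, ±τ}ⁿ`
vanishing wherever it vanishes: coordinatewise, `v i ∈ [-τ, τ] = conv {-τ, τ}` when `v i ≠ 0`,
and the convex hull of a product is the product of the convex hulls. Such `w` are at least as
sparse as `v`, so every generator of the support norm ball lies in the sparse polytope; the
converse inclusion of generators is immediate.
-/

open Set Function

theorem convexHull_eq_of_subset_of_subset_convexHull {𝕜 E : Type*} [Semiring 𝕜] [PartialOrder 𝕜]
    [AddCommMonoid E] [Module 𝕜 E] {s t : Set E} (hts : t ⊆ s) (hst : s ⊆ convexHull 𝕜 t) :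
    convexHull 𝕜 s = convexHull 𝕜 t :=
  (convexHull_min hst (convex_convexHull 𝕜 t)).antisymm (convexHull_mono hts)

theorem LinearEquiv.convexHull_preimage {𝕜 E F : Type*} [Semiring 𝕜] [PartialOrder 𝕜]
    [AddCommMonoid E] [AddCommMonoid F] [Module 𝕜 E] [Module 𝕜 F] (e : E ≃ₗ[𝕜] F) (s : Set F) :
    convexHull 𝕜 (e ⁻¹' s) = e ⁻¹' convexHull 𝕜 s := by
  rw [← e.image_symm_eq_preimage, ← e.image_symm_eq_preimage]
  exact (e.symm.toLinearMap.image_convexHull s).symm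

theorem mem_convexHull_signVectors_of_abs_le {ι : Type*} [Finite ι] {v : ι → ℝ} {τ : ℝ}
    (hv : ∀ i, |v i| ≤ τ) :
    v ∈ convexHull ℝ
      {w : ι → ℝ | (∀ i, w i = 0 ∨ w i = τ ∨ w i = -τ) ∧ support w ⊆ support v} := by
  classical
  let t : ι → Set ℝ := fun i => if v i = 0 then {0} else {-τ, τ}
  have hpi : univ.pi t ⊆
      {w : ι → ℝ | (∀ i, w i = 0 ∨ w i = τ ∨ w i = -τ) ∧ support w ⊆ support v} := by
    intro w hw
    have hwt : ∀ i, w i ∈ t i := fun i => hw i (mem_univ i)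
    refine ⟨fun i => ?_, fun i hwi hvi => hwi ?_⟩
    · by_cases h : v i = 0
      · exact Or.inl (by simpa [t, h] using hwt i)
      · exact Or.inr (by simpa [t, h, or_comm] using hwt i)
    · simpa [t, hvi] using hwt i
  refine convexHull_mono hpi (mem_convexHull_pi fun i _ => ?_)
  by_cases h : v i = 0
  · simp [t, h]
  · simp only [t, h, if_false, convexHull_pair, segment_eq_uIcc, mem_uIcc]
    exact Or.inl (abs_le.mp (hv i))

theorem kInftySupportBall_eq_kSparsePolytope_general (n k : ℕ) (τ : ℝ) (hτ : 0 < τ) :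
    convexHull ℝ {v : EuclideanSpace ℝ (Fin n) |
        {i | v i ≠ 0}.ncard ≤ k ∧ (⨆ i, |v i|) ≤ τ} =
    convexHull ℝ {v : EuclideanSpace ℝ (Fin n) |
        (∀ i, v i = 0 ∨ v i = τ ∨ v i = -τ) ∧ {i | v i ≠ 0}.ncard ≤ k} := by
  have iSup_abs_le_iff (v : EuclideanSpace ℝ (Fin n)) : (⨆ i, |v i|) ≤ τ ↔ ∀ i, |v i| ≤ τ :=
    ⟨fun h i => (le_ciSup (finite_range _).bddAbove i).trans h, fun h => Real.iSup_le h hτ.le⟩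
  refine convexHull_eq_of_subset_of_subset_convexHull ?_ ?_
  · rintro w ⟨hw, hcard⟩
    refine ⟨hcard, (iSup_abs_le_iff w).2 fun i => ?_⟩
    rcases hw i with h | h | h <;> simp [h, abs_of_pos hτ, hτ.le]
  · rintro v ⟨hcard, hv⟩
    have hmem := mem_convexHull_signVectors_of_abs_le ((iSup_abs_le_iff v).1 hv)
    change v ∈ convexHull ℝ (WithLp.linearEquiv 2 ℝ (Fin n → ℝ) ⁻¹'
      {w | (∀ i, w i = 0 ∨ w i = τ ∨ w i = -τ) ∧ (support w).ncard ≤ k})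
    rw [LinearEquiv.convexHull_preimage]
    refine convexHull_mono ?_ hmem
    exact fun w ⟨hw, hsupp⟩ => ⟨hw, (ncard_le_ncard hsupp).trans hcard⟩

/-- the (k, ∞)-support norm ball, i.e. the convex hull of all
k-sparse vectors with ℓ^∞ norm at most τ, coincides with the k-sparse polytope
P_k(τ), the convex hull of all k-sparse vectors with entries in {0, τ, −τ}. -/
theorem kInftySupportBall_eq_kSparsePolytope (n k : ℕ) (hn : 1 ≤ n) (hk1 : 1 ≤ k)
    (hkn : k ≤ n) (τ : ℝ) (hτ : 0 < τ) :
    convexHull ℝ {v : EuclideanSpace ℝ (Fin n) |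
        {i | v i ≠ 0}.ncard ≤ k ∧ (⨆ i, |v i|) ≤ τ} =
    convexHull ℝ {v : EuclideanSpace ℝ (Fin n) |
        (∀ i, v i = 0 ∨ v i = τ ∨ v i = -τ) ∧ {i | v i ≠ 0}.ncard ≤ k} :=
  kInftySupportBall_eq_kSparsePolytope_general n k τ hτ
end

section
/- Let C ⊆ ℝⁿ be a compact convex set with L₂-diameter at most D, and let L : ℝⁿ → ℝ be differentiable and M-smooth. Let θ ∈ C, let g ∈ ℝⁿ (a stochastic gradient estimate), let v ∈ argmin_{u ∈ C} ⟨g, u⟩, let η ∈ [0, 1], and set θ' = θ + η(v − θ). Then L(θ') ≤ L(θ) − η·𝒢(θ) + η·D·‖∇L(θ) − g‖ + (M D² η²)/2, where 𝒢(θ) = max_{u ∈ C} ⟨u − θ, −∇L(θ)⟩ is the Frank–Wolfe gap of L at θ on C. -/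
open RealInnerProductSpace

/-! The descent lemma of an `M`-smooth function, applied along the Frank–Wolfe step
`θ' - θ = η (v - θ)`, bounds `L θ' - L θ` by `η ⟪∇L θ, v - θ⟫ + M D² η² / 2`. For every `u ∈ C`,
minimality of `v` for `⟪g, ·⟫` gives `⟪∇L θ, v - u⟫ ≤ ⟪∇L θ - g, v - u⟫ ≤ D ‖∇L θ - g‖`, so the
first term is at most `η (D ‖∇L θ - g‖ - 𝒢 θ)`. -/

section Smooth

variable {F : Type*} [NormedAddCommGroup F] [InnerProductSpace ℝ F] [CompleteSpace F]

theorem HasGradientAt.hasDerivAt_comp_add_smul {f : F → ℝ} {f' x d : F} {t : ℝ}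
    (h : HasGradientAt f f' (x + t • d)) :
    HasDerivAt (fun s : ℝ => f (x + s • d)) ⟪f', d⟫ t := by
  have hline : HasDerivAt (fun s : ℝ => x + s • d) d t := by
    simpa using ((hasDerivAt_id t).smul_const d).const_add x
  have hcomp := h.hasFDerivAt.comp_hasDerivAt t hline
  simp only [InnerProductSpace.toDual_apply_apply] at hcomp
  exact hcomp

theorem le_add_inner_add_sq_of_gradient_lipschitz {f : F → ℝ} {f' : F → F}
    (hf : ∀ x, HasGradientAt f (f' x) x) {M : ℝ} (hM : ∀ x y, ‖f' x - f' y‖ ≤ M * ‖x - y‖)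
    (x y : F) : f y ≤ f x + ⟪f' x, y - x⟫ + M / 2 * ‖y - x‖ ^ 2 := by
  set d := y - x
  -- `φ` is antitone on `t ≥ 0` because `f'` is `M`-Lipschitz, and `φ 1 ≤ φ 0` is the claim.
  let φ : ℝ → ℝ := fun t => f (x + t • d) - t * ⟪f' x, d⟫ - M / 2 * t ^ 2 * ‖d‖ ^ 2
  let φ' : ℝ → ℝ := fun t => ⟪f' (x + t • d) - f' x, d⟫ - M * t * ‖d‖ ^ 2
  have hφ : ∀ t, HasDerivAt φ (φ' t) t := by
    intro t
    have hline := HasGradientAt.hasDerivAt_comp_add_smul (x := x) (d := d) (hf (x + t • d))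
    refine ((hline.sub ((hasDerivAt_id t).mul_const ⟪f' x, d⟫)).sub
      (((hasDerivAt_pow 2 t).const_mul (M / 2)).mul_const (‖d‖ ^ 2))).congr_deriv ?_
    simp only [φ', inner_sub_left]
    ring
  have hφ'_nonpos : ∀ t ∈ interior (Set.Ici (0 : ℝ)), φ' t ≤ 0 := by
    intro t ht
    rw [interior_Ici] at ht
    have hstep : ‖x + t • d - x‖ = t * ‖d‖ := by
      rw [add_sub_cancel_left, norm_smul, Real.norm_of_nonneg ht.le]
    have hinner : ⟪f' (x + t • d) - f' x, d⟫ ≤ M * t * ‖d‖ ^ 2 :=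
      calc ⟪f' (x + t • d) - f' x, d⟫ ≤ ‖f' (x + t • d) - f' x‖ * ‖d‖ := real_inner_le_norm _ _
        _ ≤ M * ‖x + t • d - x‖ * ‖d‖ := by gcongr; exact hM _ _
        _ = M * t * ‖d‖ ^ 2 := by rw [hstep]; ring
    exact sub_nonpos.mpr hinner
  have hanti : AntitoneOn φ (Set.Ici 0) :=
    antitoneOn_of_hasDerivWithinAt_nonpos (convex_Ici 0)
      (fun t _ => (hφ t).continuousAt.continuousWithinAt)
      (fun t _ => (hφ t).hasDerivWithinAt) hφ'_nonpos
  have h01 : φ 1 ≤ φ 0 := hanti Set.self_mem_Ici (Set.mem_Ici.mpr zero_le_one) zero_le_one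
  simp only [φ, one_smul, zero_smul, add_zero, add_sub_cancel, d] at h01
  linarith

end Smooth

section FrankWolfe

variable {F : Type*} [NormedAddCommGroup F] [InnerProductSpace ℝ F]

theorem inner_sub_le_of_forall_inner_le {C : Set F} {g v u : F} (hv : ∀ w ∈ C, ⟪g, v⟫ ≤ ⟪g, w⟫)
    (hu : u ∈ C) (a : F) : ⟪a, v - u⟫ ≤ ‖a - g‖ * ‖v - u‖ := by
  have hg : ⟪g, v - u⟫ ≤ 0 := by rw [inner_sub_right]; linarith [hv u hu]
  calc ⟪a, v - u⟫ = ⟪g, v - u⟫ + ⟪a - g, v - u⟫ := by rw [inner_sub_left]; ring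
    _ ≤ ‖a - g‖ * ‖v - u‖ := by linarith [real_inner_le_norm (a - g) (v - u)]

theorem sSup_inner_neg_le_of_forall_inner_le {C : Set F} {D : ℝ}
    (hdiam : ∀ x ∈ C, ∀ y ∈ C, ‖x - y‖ ≤ D) {θ g v : F} (hθ : θ ∈ C) (hvC : v ∈ C)
    (hv : ∀ w ∈ C, ⟪g, v⟫ ≤ ⟪g, w⟫) (a : F) :
    sSup ((fun u => ⟪u - θ, -a⟫) '' C) ≤ -⟪a, v - θ⟫ + D * ‖a - g‖ := by
  refine csSup_le ⟨_, θ, hθ, rfl⟩ ?_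
  rintro _ ⟨u, hu, rfl⟩
  have h := inner_sub_le_of_forall_inner_le hv hu a
  have hdist : ‖a - g‖ * ‖v - u‖ ≤ D * ‖a - g‖ := by
    rw [mul_comm]; exact mul_le_mul_of_nonneg_right (hdiam v hvC u hu) (norm_nonneg _)
  have hsplit : ⟪u - θ, -a⟫ = -⟪a, v - θ⟫ + ⟪a, v - u⟫ := by
    rw [inner_neg_right, real_inner_comm]
    simp only [inner_sub_right]
    ring
  linarith

end FrankWolfe

theorem sfw_descent_inequality_general (n : ℕ)
    (C : Set (EuclideanSpace ℝ (Fin n)))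
    (D : ℝ) (hdiam : ∀ x ∈ C, ∀ y ∈ C, ‖x - y‖ ≤ D)
    (L : EuclideanSpace ℝ (Fin n) → ℝ)
    (gradL : EuclideanSpace ℝ (Fin n) → EuclideanSpace ℝ (Fin n))
    (hdiff : ∀ x, HasGradientAt L (gradL x) x)
    (M : ℝ) (hM : 0 ≤ M)
    (hsmooth : ∀ x y, ‖gradL x - gradL y‖ ≤ M * ‖x - y‖)
    (θ : EuclideanSpace ℝ (Fin n)) (hθ : θ ∈ C)
    (g : EuclideanSpace ℝ (Fin n))
    (v : EuclideanSpace ℝ (Fin n)) (hvC : v ∈ C)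
    (hvmin : ∀ u ∈ C, ⟪g, v⟫ ≤ ⟪g, u⟫)
    (η : ℝ) (hη : η ∈ Set.Icc (0 : ℝ) 1)
    (θ' : EuclideanSpace ℝ (Fin n)) (hθ' : θ' = θ + η • (v - θ)) :
    L θ' ≤ L θ - η * sSup ((fun u => ⟪u - θ, -gradL θ⟫) '' C)
      + η * D * ‖gradL θ - g‖ + M * D ^ 2 * η ^ 2 / 2 := by
  have hdescent := le_add_inner_add_sq_of_gradient_lipschitz hdiff hsmooth θ θ'
  rw [hθ', add_sub_cancel_left, real_inner_smul_right, norm_smul,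
    Real.norm_of_nonneg hη.1] at hdescent
  have hgap := mul_le_mul_of_nonneg_left
    (sSup_inner_neg_le_of_forall_inner_le hdiam hθ hvC hvmin (gradL θ)) hη.1
  have hstep : M / 2 * (η * ‖v - θ‖) ^ 2 ≤ M / 2 * (η * D) ^ 2 := by
    have hη0 := hη.1
    gcongr
    exact hdiam v hvC θ hθ
  rw [hθ']
  linarith

/-- per-step descent inequality of Stochastic Frank–Wolfe. With
C compact convex of L₂-diameter at most D, L differentiable and M-smooth,
θ ∈ C, g a (stochastic) gradient estimate, v a minimizer of ⟨g, ·⟩ over C,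
η ∈ [0,1] and θ' = θ + η(v − θ):
L(θ') ≤ L(θ) − η·𝒢(θ) + η·D·‖∇L(θ) − g‖ + M D² η²/2, where
𝒢(θ) = max_{u∈C} ⟨u − θ, −∇L(θ)⟩ is the Frank–Wolfe gap. -/
theorem sfw_descent_inequality (n : ℕ)
    (C : Set (EuclideanSpace ℝ (Fin n)))
    (hconv : Convex ℝ C) (hcomp : IsCompact C)
    (D : ℝ) (hdiam : ∀ x ∈ C, ∀ y ∈ C, ‖x - y‖ ≤ D)
    (L : EuclideanSpace ℝ (Fin n) → ℝ)
    (gradL : EuclideanSpace ℝ (Fin n) → EuclideanSpace ℝ (Fin n))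
    (hdiff : ∀ x, HasGradientAt L (gradL x) x)
    (M : ℝ) (hM : 0 ≤ M)
    (hsmooth : ∀ x y, ‖gradL x - gradL y‖ ≤ M * ‖x - y‖)
    (θ : EuclideanSpace ℝ (Fin n)) (hθ : θ ∈ C)
    (g : EuclideanSpace ℝ (Fin n))
    (v : EuclideanSpace ℝ (Fin n)) (hvC : v ∈ C)
    (hvmin : ∀ u ∈ C, ⟪g, v⟫ ≤ ⟪g, u⟫)
    (η : ℝ) (hη : η ∈ Set.Icc (0 : ℝ) 1)
    (θ' : EuclideanSpace ℝ (Fin n)) (hθ' : θ' = θ + η • (v - θ)) :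
    L θ' ≤ L θ - η * sSup ((fun u => ⟪u - θ, -gradL θ⟫) '' C)
      + η * D * ‖gradL θ - g‖ + M * D ^ 2 * η ^ 2 / 2 :=
  sfw_descent_inequality_general n C D hdiam L gradL hdiff M hM hsmooth θ hθ g v hvC hvmin η hη θ'
    hθ'
end
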